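/- arXiv:2604.13265 — 4 statements merged into one kernel-verified Lean document; each statement's English description precedes it below -/
import Mathlib

section
/- Let (X, A, Γ, S, T) be random variables where A, Γ are discrete and κ = P(Γ = 1) > 0. Suppose that for all x, a, s: E[y(T) | X = x, A = a, S = s, Γ = 1] = E[y(T) | X = x, A = 1, S = s, Γ = 0] =: μ(x, 1, s), where y is a bounded measurable function. Then E[E[y(T) | X, A = a, Γ = 1] | Γ = 1] = E[(Γ/κ) ∫ μ(X, 1, s) f(s | X, A = a, Γ = 1) ds], where f(s | X, A = a, Γ = 1) denotes the conditional density of S given (X, A = a, Γ = 1). -/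
/-!
On the stratum `{A = a, Γ = 1}` the surrogacy assumption lets one replace `y(T)` by `μ(X, S)`,
and integrating `S` out against its conditional density shows that
`m(x) = ∫ μ(x, s) f(s | x) ds` is, like `r`, a version of `E[y(T) | X, A = a, Γ = 1]`.
Testing the difference against the bounded function `h = (r - m) / (1 + (r - m)²)` forces
`r(X) = m(X)` almost everywhere on that stratum, and the positive propensity `π` carries this
over to all of `{Γ = 1}`, the only place where the two integrands are nonzero.
-/

open MeasureTheory

theorem abs_div_one_add_sq_le_one (t : ℝ) : |t / (1 + t ^ 2)| ≤ 1 := by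
  have hpos : (0 : ℝ) < 1 + t ^ 2 := by positivity
  rw [abs_div, abs_of_pos hpos, div_le_one hpos]
  nlinarith [sq_abs t, abs_nonneg t]

theorem sq_div_one_add_sq_le_one (t : ℝ) : t ^ 2 / (1 + t ^ 2) ≤ 1 := by
  rw [div_le_one (by positivity)]
  linarith

theorem sq_div_one_add_sq_eq_zero_iff {t : ℝ} : t ^ 2 / (1 + t ^ 2) = 0 ↔ t = 0 := by
  have : (1 + t ^ 2) ≠ 0 := by positivity
  simp [div_eq_zero_iff, this]

section Identification

variable {Ω 𝓧 𝓢 : Type*} [MeasurableSpace Ω] [MeasurableSpace 𝓧] [MeasurableSpace 𝓢]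
  {P : Measure Ω} {X : Ω → 𝓧}

theorem integral_mul_comp_eq_integral_mediator {S : Ω → 𝓢} {w Y : Ω → ℝ} {ν : Measure 𝓢}
    {μ f : 𝓧 → 𝓢 → ℝ} (hμm : Measurable (Function.uncurry μ)) {Cμ : ℝ}
    (hμb : ∀ x s, |μ x s| ≤ Cμ)
    (hμ : ∀ g : 𝓧 → 𝓢 → ℝ, Measurable (Function.uncurry g) → (∃ C, ∀ x s, |g x s| ≤ C) →
      ∫ ω, w ω * Y ω * g (X ω) (S ω) ∂P = ∫ ω, w ω * μ (X ω) (S ω) * g (X ω) (S ω) ∂P)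
    (hf : ∀ g : 𝓧 → 𝓢 → ℝ, Measurable (Function.uncurry g) → (∃ C, ∀ x s, |g x s| ≤ C) →
      ∫ ω, w ω * g (X ω) (S ω) ∂P = ∫ ω, w ω * (∫ s, g (X ω) s * f (X ω) s ∂ν) ∂P)
    {r : 𝓧 → ℝ}
    (hr : ∀ h : 𝓧 → ℝ, Measurable h → (∃ C, ∀ x, |h x| ≤ C) →
      ∫ ω, w ω * Y ω * h (X ω) ∂P = ∫ ω, w ω * r (X ω) * h (X ω) ∂P)
    {h : 𝓧 → ℝ} (hh : Measurable h) {C : ℝ} (hC : ∀ x, |h x| ≤ C) :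
    ∫ ω, w ω * r (X ω) * h (X ω) ∂P
      = ∫ ω, w ω * (∫ s, μ (X ω) s * f (X ω) s ∂ν) * h (X ω) ∂P := by
  have hμh : ∀ x s, |μ x s * h x| ≤ Cμ * C := fun x s => by
    rw [abs_mul]
    exact mul_le_mul (hμb x s) (hC x) (abs_nonneg _) ((abs_nonneg _).trans (hμb x s))
  calc ∫ ω, w ω * r (X ω) * h (X ω) ∂P
      = ∫ ω, w ω * Y ω * h (X ω) ∂P := (hr h hh ⟨C, hC⟩).symm
    _ = ∫ ω, w ω * μ (X ω) (S ω) * h (X ω) ∂P :=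
      hμ (fun x _ => h x) (hh.comp measurable_fst) ⟨C, fun x _ => hC x⟩
    _ = ∫ ω, w ω * (μ (X ω) (S ω) * h (X ω)) ∂P := by simp only [mul_assoc]
    _ = ∫ ω, w ω * (∫ s, μ (X ω) s * h (X ω) * f (X ω) s ∂ν) ∂P :=
      hf (fun x s => μ x s * h x) (hμm.mul (hh.comp measurable_fst)) ⟨_, hμh⟩
    _ = ∫ ω, w ω * (∫ s, μ (X ω) s * f (X ω) s ∂ν) * h (X ω) ∂P := by
      simp only [mul_assoc, ← integral_mul_const, mul_right_comm _ (h _)]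

theorem integral_mul_sq_div_one_add_sq_eq_zero (hX : Measurable X) {w : Ω → ℝ}
    (hw : Integrable w P) {r m : 𝓧 → ℝ} (hr : Measurable r) (hm : Measurable m) {Cr : ℝ}
    (hrb : ∀ x, |r x| ≤ Cr)
    (htest : ∀ h : 𝓧 → ℝ, Measurable h → (∃ C, ∀ x, |h x| ≤ C) →
      ∫ ω, w ω * r (X ω) * h (X ω) ∂P = ∫ ω, w ω * m (X ω) * h (X ω) ∂P) :
    ∫ ω, w ω * ((r (X ω) - m (X ω)) ^ 2 / (1 + (r (X ω) - m (X ω)) ^ 2)) ∂P = 0 := by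
  set h : 𝓧 → ℝ := fun x => (r x - m x) / (1 + (r x - m x) ^ 2)
  have hh : Measurable h := (hr.sub hm).div (measurable_const.add ((hr.sub hm).pow_const 2))
  have hhb : ∀ x, |h x| ≤ 1 := fun x => abs_div_one_add_sq_le_one _
  have hrh : ∀ x, |r x * h x| ≤ Cr := fun x => by
    rw [abs_mul]
    exact (mul_le_of_le_one_right (abs_nonneg _) (hhb x)).trans (hrb x)
  have hdh : ∀ x, (r x - m x) * h x = (r x - m x) ^ 2 / (1 + (r x - m x) ^ 2) := fun x => by
    simp only [h]
    ring
  have hmh : ∀ x, |m x * h x| ≤ Cr + 1 := fun x => by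
    rw [show m x * h x = r x * h x - (r x - m x) * h x by ring, hdh]
    refine (abs_sub _ _).trans (add_le_add (hrh x) ?_)
    rw [abs_of_nonneg (by positivity)]
    exact sq_div_one_add_sq_le_one _
  have hwr : Integrable (fun ω => w ω * (r (X ω) * h (X ω))) P :=
    hw.mul_bdd ((hr.mul hh).comp hX).aestronglyMeasurable (ae_of_all _ fun ω => hrh (X ω))
  have hwm : Integrable (fun ω => w ω * (m (X ω) * h (X ω))) P :=
    hw.mul_bdd ((hm.mul hh).comp hX).aestronglyMeasurable (ae_of_all _ fun ω => hmh (X ω))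
  calc ∫ ω, w ω * ((r (X ω) - m (X ω)) ^ 2 / (1 + (r (X ω) - m (X ω)) ^ 2)) ∂P
      = ∫ ω, w ω * (r (X ω) * h (X ω)) - w ω * (m (X ω) * h (X ω)) ∂P := by
        congr 1
        funext ω
        rw [← hdh]
        ring
    _ = 0 := by
        rw [integral_sub hwr hwm, sub_eq_zero]
        simpa only [mul_assoc] using htest h hh ⟨1, hhb⟩

theorem integrable_ite_one_zero [IsFiniteMeasure P] {p : Ω → Prop} [DecidablePred p]
    (hp : MeasurableSet {ω | p ω}) : Integrable (fun ω => if p ω then (1 : ℝ) else 0) P :=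
  .of_bound (Measurable.ite hp measurable_const measurable_const).aestronglyMeasurable 1
    (ae_of_all _ fun ω => by split_ifs <;> simp)

theorem ae_eq_zero_or_eq_zero_of_integral_mul_eq_zero {v q : Ω → ℝ} (hv : Integrable v P)
    (hv0 : 0 ≤ v) (hq : AEStronglyMeasurable q P) (hq0 : 0 ≤ q) {C : ℝ} (hqC : ∀ ω, q ω ≤ C)
    (h : ∫ ω, v ω * q ω ∂P = 0) : ∀ᵐ ω ∂P, v ω = 0 ∨ q ω = 0 := by
  have hvq : Integrable (fun ω => v ω * q ω) P :=
    hv.mul_bdd hq (ae_of_all _ fun ω => (Real.norm_of_nonneg (hq0 ω)).trans_le (hqC ω))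
  filter_upwards [(integral_eq_zero_iff_of_nonneg (fun ω => mul_nonneg (hv0 ω) (hq0 ω)) hvq).mp h]
    with ω hω using mul_eq_zero.mp hω

end Identification

theorem mediation_formula_identification_general
    {Ω 𝓧 𝓢 𝓣 : Type*} [MeasurableSpace Ω] [MeasurableSpace 𝓧] [MeasurableSpace 𝓢]
    [MeasurableSpace 𝓣]
    (P : Measure Ω) [IsProbabilityMeasure P]
    (X : Ω → 𝓧) (A : Ω → ℕ) (Γ : Ω → ℕ) (S : Ω → 𝓢) (T : Ω → 𝓣)
    (hX : Measurable X) (hA : Measurable A) (hΓ : Measurable Γ)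
    (a : ℕ)
    (κ : ℝ)
    (y : 𝓣 → ℝ)
    (ν : Measure 𝓢) [SigmaFinite ν]
    -- positivity of the treatment propensity in the target population:
    (π : 𝓧 → ℝ) (hπm : Measurable π) (hπbd : ∀ x, 0 < π x ∧ π x ≤ 1)
    (hπ : ∀ h : 𝓧 → ℝ, Measurable h → (∃ C, ∀ x, |h x| ≤ C) →
      ∫ ω, (if A ω = a ∧ Γ ω = 1 then (1:ℝ) else 0) * h (X ω) ∂P
        = ∫ ω, (if Γ ω = 1 then (1:ℝ) else 0) * π (X ω) * h (X ω) ∂P)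
    -- μ is a common version of E[y(T) | X, S] in both the (A = a, Γ = 1) and the
    -- (A = 1, Γ = 0) strata:
    (μ : 𝓧 → 𝓢 → ℝ) (hμm : Measurable (Function.uncurry μ))
    (Cμ : ℝ) (hμb : ∀ x s, |μ x s| ≤ Cμ)
    (hμ1 : ∀ g : 𝓧 → 𝓢 → ℝ, Measurable (Function.uncurry g) → (∃ C, ∀ x s, |g x s| ≤ C) →
      ∫ ω, (if A ω = a ∧ Γ ω = 1 then (1:ℝ) else 0) * y (T ω) * g (X ω) (S ω) ∂P
        = ∫ ω, (if A ω = a ∧ Γ ω = 1 then (1:ℝ) else 0) * μ (X ω) (S ω) * g (X ω) (S ω) ∂P)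
    -- fa1 is the conditional ν-density of S given (X, A = a, Γ = 1):
    (fa1 : 𝓧 → 𝓢 → ℝ) (hfa1m : Measurable (Function.uncurry fa1))
    (hfa1 : ∀ g : 𝓧 → 𝓢 → ℝ, Measurable (Function.uncurry g) → (∃ C, ∀ x s, |g x s| ≤ C) →
      ∫ ω, (if A ω = a ∧ Γ ω = 1 then (1:ℝ) else 0) * g (X ω) (S ω) ∂P
        = ∫ ω, (if A ω = a ∧ Γ ω = 1 then (1:ℝ) else 0) * (∫ s, g (X ω) s * fa1 (X ω) s ∂ν) ∂P)
    -- r is a version of E[y(T) | X, A = a, Γ = 1]: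
    (r : 𝓧 → ℝ) (hrm : Measurable r) (Cr : ℝ) (hrb : ∀ x, |r x| ≤ Cr)
    (hr : ∀ h : 𝓧 → ℝ, Measurable h → (∃ C, ∀ x, |h x| ≤ C) →
      ∫ ω, (if A ω = a ∧ Γ ω = 1 then (1:ℝ) else 0) * y (T ω) * h (X ω) ∂P
        = ∫ ω, (if A ω = a ∧ Γ ω = 1 then (1:ℝ) else 0) * r (X ω) * h (X ω) ∂P) :
    ∫ ω, ((if Γ ω = 1 then (1:ℝ) else 0) / κ) * r (X ω) ∂P
      = ∫ ω, ((if Γ ω = 1 then (1:ℝ) else 0) / κ) * (∫ s, μ (X ω) s * fa1 (X ω) s ∂ν) ∂P := by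
  set m : 𝓧 → ℝ := fun x => ∫ s, μ x s * fa1 x s ∂ν
  have hm : Measurable m := (hμm.mul hfa1m).stronglyMeasurable.integral_prod_right.measurable
  have hstratum : Integrable (fun ω => if A ω = a ∧ Γ ω = 1 then (1 : ℝ) else 0) P :=
    integrable_ite_one_zero
      ((hA (measurableSet_singleton a)).inter (hΓ (measurableSet_singleton 1)))
  have htarget : Integrable (fun ω => (if Γ ω = 1 then (1 : ℝ) else 0) * π (X ω)) P :=
    (integrable_ite_one_zero (hΓ (measurableSet_singleton 1))).mul_bdd
      (hπm.comp hX).aestronglyMeasurable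
      (ae_of_all _ fun ω => (Real.norm_of_nonneg (hπbd (X ω)).1.le).trans_le (hπbd (X ω)).2)
  set q : 𝓧 → ℝ := fun x => (r x - m x) ^ 2 / (1 + (r x - m x) ^ 2)
  have hq : Measurable q := by fun_prop
  have hzero : ∫ ω, (if Γ ω = 1 then (1 : ℝ) else 0) * π (X ω) * q (X ω) ∂P = 0 := by
    rw [← hπ q hq ⟨1, fun x => (abs_of_nonneg (by positivity)).trans_le
      (sq_div_one_add_sq_le_one _)⟩]
    exact integral_mul_sq_div_one_add_sq_eq_zero hX hstratum hrm hm hrb fun h hh ⟨C, hC⟩ =>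
      integral_mul_comp_eq_integral_mediator (Y := fun ω => y (T ω)) hμm hμb hμ1 hfa1 hr hh hC
  have hae := ae_eq_zero_or_eq_zero_of_integral_mul_eq_zero htarget
    (fun ω => mul_nonneg (by split_ifs <;> norm_num) (hπbd (X ω)).1.le)
    (hq.comp hX).aestronglyMeasurable (fun ω => div_nonneg (sq_nonneg _) (by positivity))
    (fun ω => sq_div_one_add_sq_le_one _) hzero
  refine integral_congr_ae (hae.mono fun ω hω => ?_)
  by_cases hΓω : Γ ω = 1
  · have hqω : q (X ω) = 0 := hω.resolve_left (by simp [hΓω, (hπbd (X ω)).1.ne'])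
    exact congrArg (_ * ·) (sub_eq_zero.mp (sq_div_one_add_sq_eq_zero_iff.mp hqω))
  · simp [hΓω]

/-- Mediation-formula identification: if the conditional mean of `y(T)` given `(X, S)`
is the same in the `(A = a, Γ = 1)` arm as in the `(A = 1, Γ = 0)` arm (equal to
`μ(X, 1, S)`), then `E[E[y(T) | X, A = a, Γ = 1] | Γ = 1]
  = E[(Γ/κ) ∫ μ(X, 1, s) f(s | X, A = a, Γ = 1) ds]`. -/
theorem mediation_formula_identification
    {Ω 𝓧 𝓢 𝓣 : Type*} [MeasurableSpace Ω] [MeasurableSpace 𝓧] [MeasurableSpace 𝓢]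
    [MeasurableSpace 𝓣]
    (P : Measure Ω) [IsProbabilityMeasure P]
    (X : Ω → 𝓧) (A : Ω → ℕ) (Γ : Ω → ℕ) (S : Ω → 𝓢) (T : Ω → 𝓣)
    (hX : Measurable X) (hA : Measurable A) (hΓ : Measurable Γ) (hS : Measurable S)
    (hT : Measurable T)
    (hΓ01 : ∀ ω, Γ ω = 0 ∨ Γ ω = 1)
    (a : ℕ)
    (κ : ℝ) (hκdef : κ = (P {ω | Γ ω = 1}).toReal) (hκpos : 0 < κ)
    (y : 𝓣 → ℝ) (hy : Measurable y) (Cy : ℝ) (hyb : ∀ t, |y t| ≤ Cy)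
    (ν : Measure 𝓢) [SigmaFinite ν]
    -- positivity of the treatment propensity in the target population:
    (π : 𝓧 → ℝ) (hπm : Measurable π) (hπbd : ∀ x, 0 < π x ∧ π x ≤ 1)
    (hπ : ∀ h : 𝓧 → ℝ, Measurable h → (∃ C, ∀ x, |h x| ≤ C) →
      ∫ ω, (if A ω = a ∧ Γ ω = 1 then (1:ℝ) else 0) * h (X ω) ∂P
        = ∫ ω, (if Γ ω = 1 then (1:ℝ) else 0) * π (X ω) * h (X ω) ∂P)
    -- μ is a common version of E[y(T) | X, S] in both the (A = a, Γ = 1) and the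
    -- (A = 1, Γ = 0) strata:
    (μ : 𝓧 → 𝓢 → ℝ) (hμm : Measurable (Function.uncurry μ))
    (Cμ : ℝ) (hμb : ∀ x s, |μ x s| ≤ Cμ)
    (hμ1 : ∀ g : 𝓧 → 𝓢 → ℝ, Measurable (Function.uncurry g) → (∃ C, ∀ x s, |g x s| ≤ C) →
      ∫ ω, (if A ω = a ∧ Γ ω = 1 then (1:ℝ) else 0) * y (T ω) * g (X ω) (S ω) ∂P
        = ∫ ω, (if A ω = a ∧ Γ ω = 1 then (1:ℝ) else 0) * μ (X ω) (S ω) * g (X ω) (S ω) ∂P)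
    (hμ0 : ∀ g : 𝓧 → 𝓢 → ℝ, Measurable (Function.uncurry g) → (∃ C, ∀ x s, |g x s| ≤ C) →
      ∫ ω, (if A ω = 1 ∧ Γ ω = 0 then (1:ℝ) else 0) * y (T ω) * g (X ω) (S ω) ∂P
        = ∫ ω, (if A ω = 1 ∧ Γ ω = 0 then (1:ℝ) else 0) * μ (X ω) (S ω) * g (X ω) (S ω) ∂P)
    -- fa1 is the conditional ν-density of S given (X, A = a, Γ = 1):
    (fa1 : 𝓧 → 𝓢 → ℝ) (hfa1m : Measurable (Function.uncurry fa1))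
    (Cf : ℝ) (hfa1bd : ∀ x s, 0 ≤ fa1 x s ∧ fa1 x s ≤ Cf)
    (hfa1 : ∀ g : 𝓧 → 𝓢 → ℝ, Measurable (Function.uncurry g) → (∃ C, ∀ x s, |g x s| ≤ C) →
      ∫ ω, (if A ω = a ∧ Γ ω = 1 then (1:ℝ) else 0) * g (X ω) (S ω) ∂P
        = ∫ ω, (if A ω = a ∧ Γ ω = 1 then (1:ℝ) else 0) * (∫ s, g (X ω) s * fa1 (X ω) s ∂ν) ∂P)
    -- r is a version of E[y(T) | X, A = a, Γ = 1]:
    (r : 𝓧 → ℝ) (hrm : Measurable r) (Cr : ℝ) (hrb : ∀ x, |r x| ≤ Cr)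
    (hr : ∀ h : 𝓧 → ℝ, Measurable h → (∃ C, ∀ x, |h x| ≤ C) →
      ∫ ω, (if A ω = a ∧ Γ ω = 1 then (1:ℝ) else 0) * y (T ω) * h (X ω) ∂P
        = ∫ ω, (if A ω = a ∧ Γ ω = 1 then (1:ℝ) else 0) * r (X ω) * h (X ω) ∂P) :
    ∫ ω, ((if Γ ω = 1 then (1:ℝ) else 0) / κ) * r (X ω) ∂P
      = ∫ ω, ((if Γ ω = 1 then (1:ℝ) else 0) / κ) * (∫ s, μ (X ω) s * fa1 (X ω) s ∂ν) ∂P :=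
  mediation_formula_identification_general P X A Γ S T hX hA hΓ a κ y ν π hπm hπbd hπ μ hμm Cμ hμb
    hμ1 fa1 hfa1m hfa1 r hrm Cr hrb hr
end

section
/- Suppose μ*(x, 1, s) = μ(x, 1, s) a.s. and f*(s | x, A = a, Γ = 1) = f(s | x, A = a, Γ = 1) a.s. (model M_a holds), with positivity of all conditional probabilities/densities involved. Then the multiply-robust estimating functional E[ ((1−Γ)1{A=1}/κ)·(f*(Γ=1|X)/f*(A=1,Γ=0|X))·(f*(S|X,A=a,Γ=1)/f*(S|X,A=1,Γ=0))·(y(T) − μ*(X,1,S)) + (Γ·1{A=a}/(κ f*(A=a|X,Γ=1)))·(μ*(X,1,S) − ∫ μ*(X,1,s) f*(s|X,A=a,Γ=1) ds) + (Γ/κ)·∫ μ*(X,1,s) f*(s|X,A=a,Γ=1) ds ] equals Ψ(P) := E[(Γ/κ) ∫ μ(X,1,s) f(s|X,A=a,Γ=1) ds], even if the remaining nuisance components f*(Γ=1|X), f*(A=1,Γ=0|X), f*(S|X,A=1,Γ=0), f*(A=a|X,Γ=1) are arbitrary (bounded, positive) functions. -/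
/-!
The residual term is centred because its weight is a bounded function of `(X, S)` and
`μ (X, S)` is the regression of `y (T)` on `(X, S)` over `{A = 1, Γ = 0}`. The augmentation
term is centred because its weight `1 / (κ π* (X))` depends on `X` only and `fa1` is the
conditional density of `S` given `X` over `{A = a, Γ = 1}`. So only the plug-in term survives,
whatever the remaining nuisances are. The one analytic point is that `∫ μ (X, s) fa1 (X, s) dν`
need not be bounded; its integrability over `{A = a, Γ = 1}` follows from the density identity
itself, by truncation.
-/

open MeasureTheory Filter Function

theorem abs_div_le_div_of_abs_le {u v C ε : ℝ} (hε : 0 < ε) (hu : |u| ≤ C) (hv : ε ≤ v) :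
    |u / v| ≤ C / ε := by
  rw [abs_div, abs_of_pos (hε.trans_le hv)]
  exact div_le_div₀ ((abs_nonneg _).trans hu) hu hε hv

theorem ite_one_zero_mem_Icc (p : Prop) [Decidable p] :
    (if p then (1 : ℝ) else 0) ∈ Set.Icc 0 1 := by
  split_ifs <;> norm_num

theorem measurable_ite_eq_and_eq {Ω α β : Type*} [MeasurableSpace Ω] [MeasurableSpace α]
    [MeasurableSpace β] [MeasurableSingletonClass α] [MeasurableSingletonClass β]
    [DecidableEq α] [DecidableEq β]
    {A : Ω → α} {B : Ω → β} (hA : Measurable A) (hB : Measurable B) (i : α) (j : β) :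
    Measurable fun ω => if A ω = i ∧ B ω = j then (1 : ℝ) else 0 :=
  Measurable.ite ((hA (measurableSet_singleton i)).inter (hB (measurableSet_singleton j)))
    measurable_const measurable_const

section

variable {Ω : Type*} [MeasurableSpace Ω] {P : Measure Ω}

def IsCentered (F : Ω → ℝ) (P : Measure Ω) : Prop :=
  Integrable F P ∧ ∫ ω, F ω ∂P = 0

theorem IsCentered.congr {F G : Ω → ℝ} (hF : IsCentered F P) (hFG : ∀ ω, F ω = G ω) :
    IsCentered G P := by
  rwa [IsCentered, ← funext hFG]

theorem IsCentered.add {F G : Ω → ℝ} (hF : IsCentered F P) (hG : IsCentered G P) :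
    IsCentered (fun ω => F ω + G ω) P :=
  ⟨hF.1.add hG.1, by rw [MeasureTheory.integral_add hF.1 hG.1, hF.2, hG.2, add_zero]⟩

/-- Adding a centred term does not change an integral, even when the integral is the junk
value `0` of a non-integrable function. -/
theorem IsCentered.integral_add {F : Ω → ℝ} (hF : IsCentered F P) (G : Ω → ℝ) :
    ∫ ω, (F ω + G ω) ∂P = ∫ ω, G ω ∂P := by
  by_cases hG : Integrable G P
  · rw [MeasureTheory.integral_add hF.1 hG, hF.2, zero_add]
  · rw [integral_undef hG, integral_undef]
    exact fun hFG => hG ((hFG.sub hF.1).congr (ae_of_all _ fun ω => by simp))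

end

section WeakConditioning

variable {Ω 𝓧 𝓢 : Type*} [MeasurableSpace Ω] [MeasurableSpace 𝓧] [MeasurableSpace 𝓢]
  {P : Measure Ω} {e : Ω → ℝ} {X : Ω → 𝓧} {S : Ω → 𝓢}

theorem integrable_comp_of_abs_le [IsFiniteMeasure P] (hX : Measurable X) (hS : Measurable S)
    {g : 𝓧 → 𝓢 → ℝ} (hg : Measurable (uncurry g)) (hgb : ∃ C, ∀ x s, |g x s| ≤ C) :
    Integrable (fun ω => g (X ω) (S ω)) P := by
  obtain ⟨C, hC⟩ := hgb
  exact .of_bound (hg.comp (hX.prodMk hS)).aestronglyMeasurable C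
    (ae_of_all _ fun ω => hC _ _)

theorem integrable_mul_comp_of_abs_le [IsFiniteMeasure P] (he : Measurable e)
    (he01 : ∀ ω, e ω ∈ Set.Icc 0 1) (hX : Measurable X) (hS : Measurable S)
    {g : 𝓧 → 𝓢 → ℝ} (hg : Measurable (uncurry g)) (hgb : ∃ C, ∀ x s, |g x s| ≤ C) :
    Integrable (fun ω => e ω * g (X ω) (S ω)) P :=
  (integrable_comp_of_abs_le hX hS hg hgb).bdd_mul (c := 1) he.aestronglyMeasurable
    (ae_of_all _ fun ω => by
      rw [Real.norm_eq_abs, abs_le]; exact ⟨by linarith [(he01 ω).1], (he01 ω).2⟩)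

variable {ν : Measure 𝓢} [SFinite ν] {f : 𝓧 → 𝓢 → ℝ}

/-- Weak form of "`f x` is the `ν`-density of the law of `S` given `X = x` under `e • P`",
tested against bounded measurable functions of `(X, S)`. -/
def IsCondDensity (P : Measure Ω) (e : Ω → ℝ) (X : Ω → 𝓧) (S : Ω → 𝓢) (ν : Measure 𝓢)
    (f : 𝓧 → 𝓢 → ℝ) : Prop :=
  ∀ g : 𝓧 → 𝓢 → ℝ, Measurable (uncurry g) → (∃ C, ∀ x s, |g x s| ≤ C) →
    ∫ ω, e ω * g (X ω) (S ω) ∂P = ∫ ω, e ω * (∫ s, g (X ω) s * f (X ω) s ∂ν) ∂P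

theorem measurable_integral_mul {g : 𝓧 → 𝓢 → ℝ} (hg : Measurable (uncurry g))
    (hf : Measurable (uncurry f)) : Measurable fun x => ∫ s, g x s * f x s ∂ν :=
  (hg.mul hf).stronglyMeasurable.integral_prod_right'.measurable

/-- With `J x = ∫ s, g x s * f x s ∂ν`, testing the density identity against the truncations
`𝟙{J ≤ n} g` bounds the integrals of `e * J ∘ X` over the sets `{J ∘ X ≤ n}`, which exhaust `Ω`. -/
theorem IsCondDensity.integrable_mul_integral_of_nonneg [IsFiniteMeasure P]
    (hd : IsCondDensity P e X S ν f) (he : Measurable e) (he01 : ∀ ω, e ω ∈ Set.Icc 0 1)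
    (hX : Measurable X) (hS : Measurable S) (hf : Measurable (uncurry f))
    (hf0 : ∀ x s, 0 ≤ f x s) {g : 𝓧 → 𝓢 → ℝ} (hg : Measurable (uncurry g))
    (hg0 : ∀ x s, 0 ≤ g x s) (hgb : ∃ C, ∀ x s, |g x s| ≤ C) :
    Integrable (fun ω => e ω * ∫ s, g (X ω) s * f (X ω) s ∂ν) P := by
  set J : 𝓧 → ℝ := fun x => ∫ s, g x s * f x s ∂ν
  have hJ : Measurable J := measurable_integral_mul hg hf
  have hJ0 : ∀ x, 0 ≤ J x := fun x => integral_nonneg fun s => mul_nonneg (hg0 x s) (hf0 x s)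
  let g' : ℕ → 𝓧 → 𝓢 → ℝ := fun n x s => if J x ≤ n then g x s else 0
  have hg' : ∀ n, Measurable (uncurry (g' n)) := fun n =>
    Measurable.ite (measurableSet_le (hJ.comp measurable_fst) measurable_const) hg
      measurable_const
  have hg'b : ∀ n, ∃ C, ∀ x s, |g' n x s| ≤ C := fun n => by
    obtain ⟨C, hC⟩ := hgb
    refine ⟨C, fun x s => ?_⟩
    by_cases h : J x ≤ n
    · simpa [g', h] using hC x s
    · simpa [g', h] using (abs_nonneg _).trans (hC x s)
  have hcover : AECover P atTop fun n : ℕ => {ω | J (X ω) ≤ n} :=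
    ⟨ae_of_all _ fun ω => tendsto_natCast_atTop_atTop.eventually_ge_atTop (J (X ω)),
      fun n => measurableSet_le (hJ.comp hX) measurable_const⟩
  have hset : ∀ n : ℕ, ∫ ω in {ω | J (X ω) ≤ n}, e ω * J (X ω) ∂P
      = ∫ ω, e ω * g' n (X ω) (S ω) ∂P := fun n => by
    rw [← integral_indicator (hcover.measurableSet n), hd (g' n) (hg' n) (hg'b n)]
    congr 1 with ω
    by_cases h : J (X ω) ≤ n
    · rw [Set.indicator_of_mem (show ω ∈ {ω | J (X ω) ≤ n} from h)]
      simp only [g', if_pos h, J]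
    · rw [Set.indicator_of_notMem (show ω ∉ {ω | J (X ω) ≤ n} from h)]
      simp [g', h]
  refine hcover.integrable_of_integral_bounded_of_nonneg_ae (∫ ω, g (X ω) (S ω) ∂P)
    (fun n => ?_) (ae_of_all _ fun ω => mul_nonneg (he01 ω).1 (hJ0 _))
    (Eventually.of_forall fun n => ?_)
  · refine .of_bound (measure_lt_top _ _) (he.mul (hJ.comp hX)).aestronglyMeasurable n
      (ae_restrict_of_forall_mem (hcover.measurableSet n) fun ω (hω : J (X ω) ≤ n) => ?_)
    rw [Real.norm_eq_abs, abs_of_nonneg (mul_nonneg (he01 ω).1 (hJ0 _))]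
    exact (mul_le_of_le_one_left (hJ0 _) (he01 ω).2).trans hω
  · rw [hset]
    refine integral_mono (integrable_mul_comp_of_abs_le he he01 hX hS (hg' n) (hg'b n))
      (integrable_comp_of_abs_le hX hS hg hgb) fun ω => ?_
    by_cases h : J (X ω) ≤ n
    · simpa [g', h] using mul_le_of_le_one_left (hg0 _ _) (he01 ω).2
    · simpa [g', h] using hg0 _ _

theorem IsCondDensity.integrable_mul_integral [IsFiniteMeasure P]
    (hd : IsCondDensity P e X S ν f) (he : Measurable e) (he01 : ∀ ω, e ω ∈ Set.Icc 0 1)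
    (hX : Measurable X) (hS : Measurable S) (hf : Measurable (uncurry f))
    (hf0 : ∀ x s, 0 ≤ f x s) {g : 𝓧 → 𝓢 → ℝ} (hg : Measurable (uncurry g))
    (hgb : ∃ C, ∀ x s, |g x s| ≤ C) :
    Integrable (fun ω => e ω * ∫ s, g (X ω) s * f (X ω) s ∂ν) P := by
  have habs : Integrable (fun ω => e ω * ∫ s, |g (X ω) s| * f (X ω) s ∂ν) P :=
    hd.integrable_mul_integral_of_nonneg he he01 hX hS hf hf0 (g := fun x s => |g x s|)
      hg.abs (fun _ _ => abs_nonneg _) (by simpa only [abs_abs] using hgb)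
  refine habs.mono' (he.mul ((measurable_integral_mul hg hf).comp hX)).aestronglyMeasurable
    (ae_of_all _ fun ω => ?_)
  rw [Real.norm_eq_abs, abs_mul, abs_of_nonneg (he01 ω).1]
  refine mul_le_mul_of_nonneg_left ((abs_integral_le_integral_abs).trans_eq ?_) (he01 ω).1
  simp_rw [abs_mul, abs_of_nonneg (hf0 _ _)]

theorem IsCondDensity.isCentered_mul_sub_integral [IsFiniteMeasure P]
    (hd : IsCondDensity P e X S ν f) (he : Measurable e) (he01 : ∀ ω, e ω ∈ Set.Icc 0 1)
    (hX : Measurable X) (hS : Measurable S) (hf : Measurable (uncurry f))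
    (hf0 : ∀ x s, 0 ≤ f x s) {g : 𝓧 → 𝓢 → ℝ} (hg : Measurable (uncurry g))
    (hgb : ∃ C, ∀ x s, |g x s| ≤ C) :
    IsCentered (fun ω => e ω * (g (X ω) (S ω) - ∫ s, g (X ω) s * f (X ω) s ∂ν)) P := by
  have h₁ := integrable_mul_comp_of_abs_le (P := P) he he01 hX hS hg hgb
  have h₂ := hd.integrable_mul_integral he he01 hX hS hf hf0 hg hgb
  simp_rw [mul_sub]
  exact ⟨h₁.sub h₂, by rw [integral_sub h₁ h₂, hd g hg hgb, sub_self]⟩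

/-- Weak form of "`m (X, S) = E[Y | X, S]` under `e • P`". -/
def IsCondRegression (P : Measure Ω) (e Y : Ω → ℝ) (X : Ω → 𝓧) (S : Ω → 𝓢)
    (m : 𝓧 → 𝓢 → ℝ) : Prop :=
  ∀ g : 𝓧 → 𝓢 → ℝ, Measurable (uncurry g) → (∃ C, ∀ x s, |g x s| ≤ C) →
    ∫ ω, e ω * Y ω * g (X ω) (S ω) ∂P = ∫ ω, e ω * m (X ω) (S ω) * g (X ω) (S ω) ∂P

theorem IsCondRegression.isCentered_mul_sub_mul [IsFiniteMeasure P] {Y : Ω → ℝ}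
    {m : 𝓧 → 𝓢 → ℝ} (hr : IsCondRegression P e Y X S m) (he : Measurable e)
    (he01 : ∀ ω, e ω ∈ Set.Icc 0 1) (hX : Measurable X) (hS : Measurable S)
    (hY : Measurable Y) (hYb : ∃ C, ∀ ω, |Y ω| ≤ C) (hm : Measurable (uncurry m))
    (hmb : ∃ C, ∀ x s, |m x s| ≤ C) {g : 𝓧 → 𝓢 → ℝ} (hg : Measurable (uncurry g))
    (hgb : ∃ C, ∀ x s, |g x s| ≤ C) :
    IsCentered (fun ω => (e ω * Y ω - e ω * m (X ω) (S ω)) * g (X ω) (S ω)) P := by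
  obtain ⟨CY, hCY⟩ := hYb
  have h₁ : Integrable (fun ω => e ω * Y ω * g (X ω) (S ω)) P :=
    (integrable_comp_of_abs_le hX hS hg hgb).bdd_mul (c := CY) (he.mul hY).aestronglyMeasurable
      (ae_of_all _ fun ω => by
        rw [Real.norm_eq_abs, abs_mul, abs_of_nonneg (he01 ω).1]
        exact (mul_le_of_le_one_left (abs_nonneg _) (he01 ω).2).trans (hCY ω))
  have h₂ : Integrable (fun ω => e ω * m (X ω) (S ω) * g (X ω) (S ω)) P := by
    obtain ⟨Cm, hCm⟩ := hmb
    obtain ⟨Cg, hCg⟩ := hgb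
    simp_rw [mul_assoc]
    exact integrable_mul_comp_of_abs_le (g := fun x s => m x s * g x s) he he01 hX hS
      (hm.mul hg) ⟨Cm * Cg, fun x s =>
      (abs_mul _ _).trans_le
        (mul_le_mul (hCm x s) (hCg x s) (abs_nonneg _) ((abs_nonneg _).trans (hCm x s)))⟩
  simp_rw [sub_mul]
  exact ⟨h₁.sub h₂, by rw [integral_sub h₁ h₂, hr g hg hgb, sub_self]⟩

end WeakConditioning

theorem multiple_robustness_Ma_general
    {Ω 𝓧 𝓢 𝓣 : Type*} [MeasurableSpace Ω] [MeasurableSpace 𝓧] [MeasurableSpace 𝓢]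
    [MeasurableSpace 𝓣]
    (P : Measure Ω) [IsProbabilityMeasure P]
    (X : Ω → 𝓧) (A : Ω → ℕ) (Γ : Ω → ℕ) (S : Ω → 𝓢) (T : Ω → 𝓣)
    (hX : Measurable X) (hA : Measurable A) (hΓ : Measurable Γ) (hS : Measurable S)
    (hT : Measurable T)
    (a : ℕ) (ε M : ℝ) (hε : 0 < ε)
    (κ : ℝ)
    (y : 𝓣 → ℝ) (hy : Measurable y) (Cy : ℝ) (hyb : ∀ t, |y t| ≤ Cy)
    (ν : Measure 𝓢) [SigmaFinite ν]
    -- μ is the true outcome regression E[y(T) | X, A = 1, S, Γ = 0] (model M_a):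
    (μ : 𝓧 → 𝓢 → ℝ) (hμm : Measurable (Function.uncurry μ))
    (Cμ : ℝ) (hμb : ∀ x s, |μ x s| ≤ Cμ)
    (hμ0 : ∀ g : 𝓧 → 𝓢 → ℝ, Measurable (Function.uncurry g) → (∃ C, ∀ x s, |g x s| ≤ C) →
      ∫ ω, (if A ω = 1 ∧ Γ ω = 0 then (1:ℝ) else 0) * y (T ω) * g (X ω) (S ω) ∂P
        = ∫ ω, (if A ω = 1 ∧ Γ ω = 0 then (1:ℝ) else 0) * μ (X ω) (S ω) * g (X ω) (S ω) ∂P)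
    -- fa1 is the true conditional ν-density of S given (X, A = a, Γ = 1) (model M_a):
    (fa1 : 𝓧 → 𝓢 → ℝ) (hfa1m : Measurable (Function.uncurry fa1))
    (hfa1bd : ∀ x s, 0 ≤ fa1 x s ∧ fa1 x s ≤ M)
    (hfa1 : ∀ g : 𝓧 → 𝓢 → ℝ, Measurable (Function.uncurry g) → (∃ C, ∀ x s, |g x s| ≤ C) →
      ∫ ω, (if A ω = a ∧ Γ ω = 1 then (1:ℝ) else 0) * g (X ω) (S ω) ∂P
        = ∫ ω, (if A ω = a ∧ Γ ω = 1 then (1:ℝ) else 0) * (∫ s, g (X ω) s * fa1 (X ω) s ∂ν) ∂P)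
    -- the remaining nuisance limits are arbitrary bounded positive functions:
    (w1 : 𝓧 → ℝ) (hw1m : Measurable w1) (hw1bd : ∀ x, ε ≤ w1 x ∧ w1 x ≤ M)
    (w2 : 𝓧 → ℝ) (hw2m : Measurable w2) (hw2bd : ∀ x, ε ≤ w2 x ∧ w2 x ≤ M)
    (wS : 𝓧 → 𝓢 → ℝ) (hwSm : Measurable (Function.uncurry wS))
    (hwSbd : ∀ x s, ε ≤ wS x s ∧ wS x s ≤ M)
    (πst : 𝓧 → ℝ) (hπstm : Measurable πst) (hπstbd : ∀ x, ε ≤ πst x ∧ πst x ≤ M) :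
    ∫ ω, (((if A ω = 1 ∧ Γ ω = 0 then (1:ℝ) else 0) / κ)
            * (w1 (X ω) / w2 (X ω)) * (fa1 (X ω) (S ω) / wS (X ω) (S ω))
            * (y (T ω) - μ (X ω) (S ω))
        + ((if A ω = a ∧ Γ ω = 1 then (1:ℝ) else 0) / (κ * πst (X ω)))
            * (μ (X ω) (S ω) - ∫ s, μ (X ω) s * fa1 (X ω) s ∂ν)
        + ((if Γ ω = 1 then (1:ℝ) else 0) / κ) * (∫ s, μ (X ω) s * fa1 (X ω) s ∂ν)) ∂P
      = ∫ ω, ((if Γ ω = 1 then (1:ℝ) else 0) / κ) * (∫ s, μ (X ω) s * fa1 (X ω) s ∂ν) ∂P := by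
  have hw : ∀ x s, |w1 x / w2 x * (fa1 x s / wS x s) / κ| ≤ M / ε * (M / ε) / |κ| :=
    fun x s => by
      have hw1 : |w1 x| ≤ M := (abs_of_pos (hε.trans_le (hw1bd x).1)).trans_le (hw1bd x).2
      rw [abs_div, abs_mul]
      gcongr
      · exact div_nonneg ((abs_nonneg _).trans hw1) hε.le
      · exact abs_div_le_div_of_abs_le hε hw1 (hw2bd x).1
      · exact abs_div_le_div_of_abs_le hε
          ((abs_of_nonneg (hfa1bd x s).1).trans_le (hfa1bd x s).2) (hwSbd x s).1
  have hμπ : ∀ x s, |μ x s / (κ * πst x)| ≤ Cμ / ε / |κ| := fun x s => by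
    rw [mul_comm, ← div_div, abs_div]
    gcongr
    exact abs_div_le_div_of_abs_le hε (hμb x s) (hπstbd x).1
  have h₁ := IsCondRegression.isCentered_mul_sub_mul hμ0 (measurable_ite_eq_and_eq hA hΓ 1 0)
    (fun _ => ite_one_zero_mem_Icc _) hX hS (hy.comp hT) ⟨Cy, fun _ => hyb _⟩ hμm ⟨Cμ, hμb⟩
    (g := fun x s => w1 x / w2 x * (fa1 x s / wS x s) / κ)
    ((((hw1m.comp measurable_fst).div (hw2m.comp measurable_fst)).mul
      (hfa1m.div hwSm)).div_const κ)
    ⟨_, hw⟩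
  have h₂ := IsCondDensity.isCentered_mul_sub_integral hfa1 (measurable_ite_eq_and_eq hA hΓ a 1)
    (fun _ => ite_one_zero_mem_Icc _) hX hS hfa1m (fun x s => (hfa1bd x s).1)
    (g := fun x s => μ x s / (κ * πst x))
    (hμm.div (measurable_const.mul (hπstm.comp measurable_fst))) ⟨_, hμπ⟩
  refine ((h₁.congr fun ω => ?_).add (h₂.congr fun ω => ?_)).integral_add _
  · ring
  · simp_rw [div_mul_eq_mul_div, integral_div]
    ring

/-- Multiple robustness under model `M_a`: if the outcome regression `μ` and the
surrogate density `f(s|X,A=a,Γ=1)` are correctly specified, the multiply-robust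
estimating functional is unbiased for `Ψ(P) = E[(Γ/κ)∫ μ(X,1,s) f(s|X,A=a,Γ=1) ds]`,
for arbitrary (bounded, positive) remaining nuisance components. -/
theorem multiple_robustness_Ma
    {Ω 𝓧 𝓢 𝓣 : Type*} [MeasurableSpace Ω] [MeasurableSpace 𝓧] [MeasurableSpace 𝓢]
    [MeasurableSpace 𝓣]
    (P : Measure Ω) [IsProbabilityMeasure P]
    (X : Ω → 𝓧) (A : Ω → ℕ) (Γ : Ω → ℕ) (S : Ω → 𝓢) (T : Ω → 𝓣)
    (hX : Measurable X) (hA : Measurable A) (hΓ : Measurable Γ) (hS : Measurable S)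
    (hT : Measurable T)
    (hΓ01 : ∀ ω, Γ ω = 0 ∨ Γ ω = 1)
    (a : ℕ) (ε M : ℝ) (hε : 0 < ε) (hεM : ε ≤ M)
    (κ : ℝ) (hκdef : κ = (P {ω | Γ ω = 1}).toReal) (hκpos : 0 < κ)
    (y : 𝓣 → ℝ) (hy : Measurable y) (Cy : ℝ) (hyb : ∀ t, |y t| ≤ Cy)
    (ν : Measure 𝓢) [SigmaFinite ν]
    -- μ is the true outcome regression E[y(T) | X, A = 1, S, Γ = 0] (model M_a):
    (μ : 𝓧 → 𝓢 → ℝ) (hμm : Measurable (Function.uncurry μ))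
    (Cμ : ℝ) (hμb : ∀ x s, |μ x s| ≤ Cμ)
    (hμ0 : ∀ g : 𝓧 → 𝓢 → ℝ, Measurable (Function.uncurry g) → (∃ C, ∀ x s, |g x s| ≤ C) →
      ∫ ω, (if A ω = 1 ∧ Γ ω = 0 then (1:ℝ) else 0) * y (T ω) * g (X ω) (S ω) ∂P
        = ∫ ω, (if A ω = 1 ∧ Γ ω = 0 then (1:ℝ) else 0) * μ (X ω) (S ω) * g (X ω) (S ω) ∂P)
    -- fa1 is the true conditional ν-density of S given (X, A = a, Γ = 1) (model M_a):
    (fa1 : 𝓧 → 𝓢 → ℝ) (hfa1m : Measurable (Function.uncurry fa1))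
    (hfa1bd : ∀ x s, 0 ≤ fa1 x s ∧ fa1 x s ≤ M)
    (hfa1 : ∀ g : 𝓧 → 𝓢 → ℝ, Measurable (Function.uncurry g) → (∃ C, ∀ x s, |g x s| ≤ C) →
      ∫ ω, (if A ω = a ∧ Γ ω = 1 then (1:ℝ) else 0) * g (X ω) (S ω) ∂P
        = ∫ ω, (if A ω = a ∧ Γ ω = 1 then (1:ℝ) else 0) * (∫ s, g (X ω) s * fa1 (X ω) s ∂ν) ∂P)
    -- the remaining nuisance limits are arbitrary bounded positive functions:
    (w1 : 𝓧 → ℝ) (hw1m : Measurable w1) (hw1bd : ∀ x, ε ≤ w1 x ∧ w1 x ≤ M)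
    (w2 : 𝓧 → ℝ) (hw2m : Measurable w2) (hw2bd : ∀ x, ε ≤ w2 x ∧ w2 x ≤ M)
    (wS : 𝓧 → 𝓢 → ℝ) (hwSm : Measurable (Function.uncurry wS))
    (hwSbd : ∀ x s, ε ≤ wS x s ∧ wS x s ≤ M)
    (πst : 𝓧 → ℝ) (hπstm : Measurable πst) (hπstbd : ∀ x, ε ≤ πst x ∧ πst x ≤ M) :
    ∫ ω, (((if A ω = 1 ∧ Γ ω = 0 then (1:ℝ) else 0) / κ)
            * (w1 (X ω) / w2 (X ω)) * (fa1 (X ω) (S ω) / wS (X ω) (S ω))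
            * (y (T ω) - μ (X ω) (S ω))
        + ((if A ω = a ∧ Γ ω = 1 then (1:ℝ) else 0) / (κ * πst (X ω)))
            * (μ (X ω) (S ω) - ∫ s, μ (X ω) s * fa1 (X ω) s ∂ν)
        + ((if Γ ω = 1 then (1:ℝ) else 0) / κ) * (∫ s, μ (X ω) s * fa1 (X ω) s ∂ν)) ∂P
      = ∫ ω, ((if Γ ω = 1 then (1:ℝ) else 0) / κ) * (∫ s, μ (X ω) s * fa1 (X ω) s ∂ν) ∂P :=
  multiple_robustness_Ma_general P X A Γ S T hX hA hΓ hS hT a ε M hε κ y hy Cy hyb ν μ hμm Cμ hμb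
    hμ0 fa1 hfa1m hfa1bd hfa1 w1 hw1m hw1bd w2 hw2m hw2bd wS hwSm hwSbd πst hπstm hπstbd
end

section
/- Let φ be a fixed square-integrable function with E_P[φ(O)] = 0, and let P_n be the empirical measure of n i.i.d. observations. Suppose φ̂ is estimated from an independent sample and satisfies ‖φ̂ − φ‖_{L²(P)} = o_P(1). Then (P_n − P)(φ̂ − φ) = O_P(‖φ̂ − φ‖_{L²(P)} / n^{1/2}) = o_P(n^{−1/2}). -/
/-!
Conditionally on the auxiliary sample, `φ̂ - φ` is a fixed function `g ∈ L²`, and `(ℙₙ - P) g` is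
the average of the `n` i.i.d. centred variables `g (O i) - P g`. Its variance is therefore
`Var g / n ≤ ‖g‖₂² / n`, and Chebyshev's inequality at the levels `M ‖g‖₂ / √n` and `δ / √n`
gives the `O_P` bound and, since `‖g‖₂ → 0`, the `o_P(n^{-1/2})` bound.
-/

open MeasureTheory Filter ProbabilityTheory

section Variance

variable {α : Type*} [MeasurableSpace α] {μ : Measure α}

lemma MeasureTheory.MemLp.integral_sq_eq_toReal_eLpNorm_sq {f : α → ℝ} (hf : MemLp f 2 μ) :
    ∫ x, f x ^ 2 ∂μ = (eLpNorm f 2 μ).toReal ^ 2 := by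
  rw [← Lp.norm_toLp f hf, ← real_inner_self_eq_norm_sq, L2.inner_def]
  refine integral_congr_ae ?_
  filter_upwards [hf.coeFn_toLp] with x hx
  simp [hx, sq]

lemma variance_le_toReal_eLpNorm_sq [IsProbabilityMeasure μ] {f : α → ℝ} (hf : MemLp f 2 μ) :
    variance f μ ≤ (eLpNorm f 2 μ).toReal ^ 2 :=
  (variance_le_expectation_sq hf.1).trans_eq hf.integral_sq_eq_toReal_eLpNorm_sq

lemma measure_mul_sqrt_variance_lt_abs_sub_le [IsFiniteMeasure μ] {X : α → ℝ}
    (hX : MemLp X 2 μ) {M : ℝ} (hM : 0 < M) :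
    μ {ω | M * √(variance X μ) < |X ω - μ[X]|} ≤ ENNReal.ofReal (1 / M ^ 2) := by
  rcases (variance_nonneg X μ).eq_or_lt with hvar | hvar
  · refine (measure_eq_zero_iff_ae_notMem.2 ?_).trans_le zero_le
    filter_upwards [ae_eq_integral_of_variance_eq_zero hX hvar.symm] with ω hω
    simp [hω, ← hvar]
  · calc μ {ω | M * √(variance X μ) < |X ω - μ[X]|}
        ≤ μ {ω | M * √(variance X μ) ≤ |X ω - μ[X]|} :=
          measure_mono (Set.ofPred_subset_ofPred.2 fun _ => le_of_lt)
      _ ≤ ENNReal.ofReal (variance X μ / (M * √(variance X μ)) ^ 2) :=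
          meas_ge_le_variance_div_sq hX (by positivity)
      _ = ENNReal.ofReal (1 / M ^ 2) := by
          rw [mul_pow, Real.sq_sqrt hvar.le]
          field_simp

end Variance

section CenteredEmpiricalMean

variable {Ω 𝓞 : Type*} [MeasurableSpace 𝓞] {μ : Measure 𝓞} {O : ℕ → Ω → 𝓞}

/-- `(ℙₙ - P) g`, for the empirical measure `ℙₙ` of the sample `O 0, …, O (n - 1)`. -/
noncomputable def centeredEmpiricalMean (μ : Measure 𝓞) (O : ℕ → Ω → 𝓞) (g : 𝓞 → ℝ) (n : ℕ)
    (ω : Ω) : ℝ :=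
  (∑ i ∈ Finset.range n, (g (O i ω) - ∫ o, g o ∂μ)) / n

lemma centeredEmpiricalMean_eq_smul_sum (g : 𝓞 → ℝ) (n : ℕ) :
    centeredEmpiricalMean μ O g n =
      (n : ℝ)⁻¹ • ∑ i ∈ Finset.range n, (fun o => g o - ∫ o, g o ∂μ) ∘ O i := by
  ext ω
  simp [centeredEmpiricalMean, Finset.sum_apply, div_eq_inv_mul]

variable [MeasurableSpace Ω] {P : Measure Ω}

lemma variance_smul_sum_of_identDistrib {X : ℕ → Ω → ℝ} {Y : 𝓞 → ℝ}
    (hind : Pairwise fun i j => IndepFun (X i) (X j) P) (hident : ∀ i, IdentDistrib (X i) Y P μ)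
    (hY : MemLp Y 2 μ) (n : ℕ) :
    variance ((n : ℝ)⁻¹ • ∑ i ∈ Finset.range n, X i) P = variance Y μ / n := by
  rw [variance_smul, IndepFun.variance_sum (fun i _ => (hident i).symm.memLp_snd hY)
    (fun i _ j _ hij => hind hij)]
  simp only [(hident _).variance_eq, Finset.sum_const, Finset.card_range, nsmul_eq_mul]
  rcases eq_or_ne n 0 with rfl | hn
  · simp
  · field_simp

lemma identDistrib_id_of_map_eq [NeZero μ] {X : Ω → 𝓞} (hX : P.map X = μ) :
    IdentDistrib X id P μ :=
  ⟨.of_map_ne_zero (by simp [hX, NeZero.ne]), aemeasurable_id, by simp [hX]⟩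

lemma identDistrib_comp_of_map_eq [NeZero μ] (hid : ∀ i, P.map (O i) = μ)
    {g : 𝓞 → ℝ} (hg : AEMeasurable g μ) (i : ℕ) : IdentDistrib (g ∘ O i) g P μ :=
  (identDistrib_id_of_map_eq (hid i)).comp_of_aemeasurable (by rwa [hid i])

variable [IsProbabilityMeasure μ]

lemma memLp_centeredEmpiricalMean (hid : ∀ i, P.map (O i) = μ) {g : 𝓞 → ℝ} (hg : MemLp g 2 μ)
    (n : ℕ) : MemLp (centeredEmpiricalMean μ O g n) 2 P := by
  have hcent : MemLp (fun o => g o - ∫ o, g o ∂μ) 2 μ := hg.sub (memLp_const _)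
  rw [centeredEmpiricalMean_eq_smul_sum]
  exact (memLp_finsetSum' _ fun i _ =>
    (identDistrib_comp_of_map_eq hid hcent.1.aemeasurable i).symm.memLp_snd hcent).const_smul _

lemma integral_centeredEmpiricalMean (hid : ∀ i, P.map (O i) = μ)
    {g : 𝓞 → ℝ} (hg : MemLp g 2 μ) (n : ℕ) : P[centeredEmpiricalMean μ O g n] = 0 := by
  have hcent : MemLp (fun o => g o - ∫ o, g o ∂μ) 2 μ := hg.sub (memLp_const _)
  have hident := identDistrib_comp_of_map_eq hid hcent.1.aemeasurable
  rw [centeredEmpiricalMean_eq_smul_sum]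
  simp only [Pi.smul_apply, Finset.sum_apply]
  rw [integral_smul, integral_finsetSum _
    fun i _ => (hident i).symm.integrable_snd (hcent.integrable one_le_two)]
  refine smul_eq_zero_of_right _ (Finset.sum_eq_zero fun i _ => ?_)
  rw [(hident i).integral_eq, integral_sub (hg.integrable one_le_two) (integrable_const _),
    integral_const, probReal_univ, one_smul, sub_self]

lemma variance_centeredEmpiricalMean (hid : ∀ i, P.map (O i) = μ)
    (hind : Pairwise fun i j => IndepFun (O i) (O j) P) {g : 𝓞 → ℝ} (hg : MemLp g 2 μ)
    (n : ℕ) : variance (centeredEmpiricalMean μ O g n) P = variance g μ / n := by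
  have hcent : MemLp (fun o => g o - ∫ o, g o ∂μ) 2 μ := hg.sub (memLp_const _)
  have hident := identDistrib_comp_of_map_eq hid hcent.1.aemeasurable
  rw [centeredEmpiricalMean_eq_smul_sum, variance_smul_sum_of_identDistrib _ hident hcent n,
    variance_sub_const hg.1]
  intro i j hij
  exact (hind hij).comp₀ (identDistrib_id_of_map_eq (hid i)).aemeasurable_fst
    (identDistrib_id_of_map_eq (hid j)).aemeasurable_fst
    (by rw [hid i]; exact hcent.1.aemeasurable) (by rw [hid j]; exact hcent.1.aemeasurable)

lemma measure_lt_abs_centeredEmpiricalMean_le [IsFiniteMeasure P] (hid : ∀ i, P.map (O i) = μ)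
    (hind : Pairwise fun i j => IndepFun (O i) (O j) P) {g : 𝓞 → ℝ} (hg : MemLp g 2 μ)
    {M : ℝ} (hM : 0 < M) (n : ℕ) :
    P {ω | M * ((eLpNorm g 2 μ).toReal / √n) < |centeredEmpiricalMean μ O g n ω|}
      ≤ ENNReal.ofReal (1 / M ^ 2) := by
  have hsd : √(variance (centeredEmpiricalMean μ O g n) P) ≤ (eLpNorm g 2 μ).toReal / √n := by
    rw [variance_centeredEmpiricalMean hid hind hg, Real.sqrt_div' _ n.cast_nonneg]
    gcongr
    exact (Real.sqrt_le_left ENNReal.toReal_nonneg).2 (variance_le_toReal_eLpNorm_sq hg)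
  calc P {ω | M * ((eLpNorm g 2 μ).toReal / √n) < |centeredEmpiricalMean μ O g n ω|}
      ≤ P {ω | M * √(variance (centeredEmpiricalMean μ O g n) P)
          < |centeredEmpiricalMean μ O g n ω - P[centeredEmpiricalMean μ O g n]|} := by
        refine measure_mono (Set.ofPred_subset_ofPred.2 fun ω hω => ?_)
        rw [integral_centeredEmpiricalMean hid hg, sub_zero]
        exact lt_of_le_of_lt (by gcongr) hω
    _ ≤ ENNReal.ofReal (1 / M ^ 2) :=
        measure_mul_sqrt_variance_lt_abs_sub_le (memLp_centeredEmpiricalMean hid hg n) hM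

lemma measure_lt_sqrt_mul_abs_centeredEmpiricalMean_le [IsFiniteMeasure P]
    (hid : ∀ i, P.map (O i) = μ) (hind : Pairwise fun i j => IndepFun (O i) (O j) P)
    {g : 𝓞 → ℝ} (hg : MemLp g 2 μ) {δ : ℝ} (hδ : 0 < δ) {n : ℕ} (hn : 0 < n) :
    P {ω | δ < √n * |centeredEmpiricalMean μ O g n ω|}
      ≤ ENNReal.ofReal ((eLpNorm g 2 μ).toReal ^ 2 / δ ^ 2) := by
  have hsn : 0 < √(n : ℝ) := by positivity
  calc P {ω | δ < √n * |centeredEmpiricalMean μ O g n ω|}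
      ≤ P {ω | δ / √n ≤
          |centeredEmpiricalMean μ O g n ω - P[centeredEmpiricalMean μ O g n]|} := by
        refine measure_mono (Set.ofPred_subset_ofPred.2 fun ω hω => ?_)
        rw [integral_centeredEmpiricalMean hid hg, sub_zero, div_le_iff₀' hsn]
        exact hω.le
    _ ≤ ENNReal.ofReal (variance (centeredEmpiricalMean μ O g n) P / (δ / √n) ^ 2) :=
        meas_ge_le_variance_div_sq (memLp_centeredEmpiricalMean hid hg n) (by positivity)
    _ ≤ ENNReal.ofReal ((eLpNorm g 2 μ).toReal ^ 2 / δ ^ 2) := by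
        refine ENNReal.ofReal_le_ofReal ?_
        rw [variance_centeredEmpiricalMean hid hind hg, div_pow, Real.sq_sqrt n.cast_nonneg,
          div_div_div_cancel_right₀ (by positivity)]
        gcongr
        exact variance_le_toReal_eLpNorm_sq hg

end CenteredEmpiricalMean

/-- `φhat` is deterministic: the statement is conditional on the sample it is estimated from. -/
theorem crossfitting_empirical_process_general
    {Ω 𝓞 : Type*} [MeasurableSpace Ω] [MeasurableSpace 𝓞]
    (P : Measure Ω) [IsProbabilityMeasure P]
    (μ : Measure 𝓞) [IsProbabilityMeasure μ]
    (O : ℕ → Ω → 𝓞)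
    (hid : ∀ i, Measure.map (O i) P = μ)
    (hind : Pairwise fun i j => ProbabilityTheory.IndepFun (O i) (O j) P)
    (φ : 𝓞 → ℝ) (hφ2 : MemLp φ 2 μ)
    (φhat : ℕ → 𝓞 → ℝ)
    (hφhat2 : ∀ n, MemLp (φhat n) 2 μ)
    (hcons : Tendsto (fun n => eLpNorm (fun o => φhat n o - φ o) 2 μ) atTop (nhds 0)) :
    (∀ ε > (0:ℝ), ∃ M > (0:ℝ), ∀ n : ℕ, 0 < n →
      (P {ω | M * ((eLpNorm (fun o => φhat n o - φ o) 2 μ).toReal / Real.sqrt n) <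
          |(∑ i ∈ Finset.range n,
              ((φhat n (O i ω) - φ (O i ω)) - ∫ o, (φhat n o - φ o) ∂μ)) / n|}).toReal ≤ ε)
    ∧ (∀ δ > (0:ℝ), Tendsto
        (fun n : ℕ => P {ω | δ < Real.sqrt n *
          |(∑ i ∈ Finset.range n,
              ((φhat n (O i ω) - φ (O i ω)) - ∫ o, (φhat n o - φ o) ∂μ)) / n|})
        atTop (nhds 0)) := by
  have hg (n : ℕ) : MemLp (fun o => φhat n o - φ o) 2 μ := (hφhat2 n).sub hφ2
  refine ⟨fun ε hε => ⟨(√ε)⁻¹, by positivity, fun n _ => ?_⟩, fun δ hδ => ?_⟩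
  · refine ENNReal.toReal_le_of_le_ofReal hε.le ?_
    have hM : 1 / ((√ε)⁻¹) ^ 2 = ε := by rw [inv_pow, Real.sq_sqrt hε.le, one_div, inv_inv]
    exact (measure_lt_abs_centeredEmpiricalMean_le hid hind (hg n) (M := (√ε)⁻¹)
      (by positivity) n).trans_eq (by rw [hM])
  · have hbound : Tendsto (fun n => ENNReal.ofReal
        ((eLpNorm (fun o => φhat n o - φ o) 2 μ).toReal ^ 2 / δ ^ 2)) atTop (nhds 0) := by
      simpa using ENNReal.tendsto_ofReal
        ((((ENNReal.tendsto_toReal ENNReal.zero_ne_top).comp hcons).pow 2).div_const (δ ^ 2))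
    refine tendsto_of_tendsto_of_tendsto_of_le_of_le' tendsto_const_nhds hbound
      (Eventually.of_forall fun _ => zero_le) ?_
    filter_upwards [eventually_gt_atTop 0] with n hn
    exact measure_lt_sqrt_mul_abs_centeredEmpiricalMean_le hid hind (hg n) hδ hn

/-- Cross-fitting empirical process lemma: for `φ̂` estimated from an independent sample
(hence treated as a deterministic sequence after conditioning), the empirical process
term `(P_n − P)(φ̂ − φ)` is `O_P(‖φ̂ − φ‖₂ / √n)`, and is `o_P(n^{-1/2})` when
`‖φ̂ − φ‖₂ → 0`. -/
theorem crossfitting_empirical_process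
    {Ω 𝓞 : Type*} [MeasurableSpace Ω] [MeasurableSpace 𝓞]
    (P : Measure Ω) [IsProbabilityMeasure P]
    (μ : Measure 𝓞) [IsProbabilityMeasure μ]
    (O : ℕ → Ω → 𝓞) (hO : ∀ i, Measurable (O i))
    (hid : ∀ i, Measure.map (O i) P = μ)
    (hind : Pairwise fun i j => ProbabilityTheory.IndepFun (O i) (O j) P)
    (φ : 𝓞 → ℝ) (hφm : Measurable φ) (hφ2 : MemLp φ 2 μ) (hφ0 : ∫ o, φ o ∂μ = 0)
    (φhat : ℕ → 𝓞 → ℝ) (hφhatm : ∀ n, Measurable (φhat n))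
    (hφhat2 : ∀ n, MemLp (φhat n) 2 μ)
    (hcons : Tendsto (fun n => eLpNorm (fun o => φhat n o - φ o) 2 μ) atTop (nhds 0)) :
    (∀ ε > (0:ℝ), ∃ M > (0:ℝ), ∀ n : ℕ, 0 < n →
      (P {ω | M * ((eLpNorm (fun o => φhat n o - φ o) 2 μ).toReal / Real.sqrt n) <
          |(∑ i ∈ Finset.range n,
              ((φhat n (O i ω) - φ (O i ω)) - ∫ o, (φhat n o - φ o) ∂μ)) / n|}).toReal ≤ ε)
    ∧ (∀ δ > (0:ℝ), Tendsto
        (fun n : ℕ => P {ω | δ < Real.sqrt n *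
          |(∑ i ∈ Finset.range n,
              ((φhat n (O i ω) - φ (O i ω)) - ∫ o, (φhat n o - φ o) ∂μ)) / n|})
        atTop (nhds 0)) :=
  crossfitting_empirical_process_general P μ O hid hind φ hφ2 φhat hφhat2 hcons
end

section
/- Let S have conditional density f(s | X, A, Γ) with respect to a σ-finite measure ν, and let h(x, s) be bounded measurable with all positivity conditions holding (P(A=1, Γ=0 | X) ≥ ε, f(S | X, A=1, Γ=0) ≥ ε). Then E[ (1−Γ)·1{A=1} · (P(Γ=1|X)/P(A=1,Γ=0|X)) · (f(S|X, A=a, Γ=1)/f(S|X, A=1, Γ=0)) · h(X, S) ] = E[ Γ · ∫ h(X, s) f(s | X, A = a, Γ = 1) ν(ds) ]. -/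
open MeasureTheory Function

/-! The weight `(1 - Γ) 1{A = 1}` together with the conditional density `f(· | X, A = 1, Γ = 0)`
integrates any bounded `g(X, S)` to `(1 - Γ) 1{A = 1} ∫ g(X, s) f(s | X, A = 1, Γ = 0) ν(ds)`;
taking `g` to be the density ratio times `h` cancels `f(· | X, A = 1, Γ = 0)` and leaves
`(1 - Γ) 1{A = 1} (P(Γ = 1 | X) / P(A = 1, Γ = 0 | X)) ∫ h(X, s) f(s | X, A = a, Γ = 1) ν(ds)`.
The same cancellation one level down, against `P(A = 1, Γ = 0 | X)` and then `P(Γ = 1 | X)`,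
turns the weight into `Γ`. The inner integral is bounded because `ν` is finite: a density bounded
below by `ε` on an event of positive probability is integrable only against a finite measure. -/

lemma abs_div_mul_le {u v t C D ε : ℝ} (hε : 0 < ε) (hu : |u| ≤ C) (hv : ε ≤ v) (ht : |t| ≤ D) :
    |u / v * t| ≤ C / ε * D := by
  have hC : 0 ≤ C := (abs_nonneg u).trans hu
  rw [abs_mul, abs_div, abs_of_pos (hε.trans_le hv)]
  exact mul_le_mul (div_le_div₀ hC hu hε hv) ht (abs_nonneg t) (div_nonneg hC hε.le)

lemma isFiniteMeasure_of_integral_ne_zero {α : Type*} [MeasurableSpace α] {ν : Measure α}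
    {f : α → ℝ} {ε : ℝ} (hε : 0 < ε) (hf : ∀ s, ε ≤ f s) (hint : ∫ s, f s ∂ν ≠ 0) :
    IsFiniteMeasure ν := by
  have hf_int : Integrable f ν := by
    by_contra h
    exact hint (integral_undef h)
  have hε_int : Integrable (fun _ ↦ ε) ν :=
    hf_int.mono aestronglyMeasurable_const <| ae_of_all _ fun s ↦ by
      simpa [abs_of_pos hε, abs_of_pos (hε.trans_le (hf s))] using hf s
  exact (integrable_const_iff.mp hε_int).resolve_left hε.ne'

lemma isFiniteMeasure_of_density_ge {Ω 𝓧 𝓢 : Type*} [MeasurableSpace Ω] [MeasurableSpace 𝓢]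
    (P : Measure Ω) (X : Ω → 𝓧) (ν : Measure 𝓢) (w : Ω → ℝ) {ε : ℝ} (hε : 0 < ε)
    (f : 𝓧 → 𝓢 → ℝ) (hf : ∀ x s, ε ≤ f x s)
    (hdens : ∫ ω, w ω ∂P = ∫ ω, w ω * ∫ s, f (X ω) s ∂ν ∂P) (hw : ∫ ω, w ω ∂P ≠ 0) :
    IsFiniteMeasure ν := by
  obtain ⟨ω, hω⟩ := exists_ne_zero_of_integral_ne_zero (hdens ▸ hw)
  exact isFiniteMeasure_of_integral_ne_zero hε (hf (X ω)) (right_ne_zero_of_mul hω)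

lemma exists_abs_integral_mul_le {𝓧 𝓢 : Type*} [MeasurableSpace 𝓢] (ν : Measure 𝓢)
    [IsFiniteMeasure ν] {h f : 𝓧 → 𝓢 → ℝ} {Ch Cf : ℝ} (hh : ∀ x s, |h x s| ≤ Ch)
    (hf : ∀ x s, |f x s| ≤ Cf) : ∃ C, ∀ x, |∫ s, h x s * f x s ∂ν| ≤ C := by
  refine ⟨Ch * Cf * ν.real Set.univ, fun x ↦ ?_⟩
  rw [← Real.norm_eq_abs]
  refine norm_integral_le_of_norm_le_const <| ae_of_all _ fun s ↦ ?_
  rw [Real.norm_eq_abs, abs_mul]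
  exact mul_le_mul (hh x s) (hf x s) (abs_nonneg _) ((abs_nonneg _).trans (hh x s))

section Reweighting

variable {Ω 𝓧 𝓢 : Type*} [MeasurableSpace Ω] [MeasurableSpace 𝓧] [MeasurableSpace 𝓢]
  (P : Measure Ω) (X : Ω → 𝓧) (S : Ω → 𝓢) (ν : Measure 𝓢) {ε : ℝ}

theorem integral_mul_density_ratio_mul (w : Ω → ℝ) (hε : 0 < ε) (f₀ f₁ : 𝓧 → 𝓢 → ℝ)
    (hf₀m : Measurable (uncurry f₀)) (hf₀ : ∀ x s, ε ≤ f₀ x s)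
    (hf₁m : Measurable (uncurry f₁)) (hf₁ : ∃ C, ∀ x s, |f₁ x s| ≤ C)
    (hdens : ∀ g : 𝓧 → 𝓢 → ℝ, Measurable (uncurry g) → (∃ C, ∀ x s, |g x s| ≤ C) →
      ∫ ω, w ω * g (X ω) (S ω) ∂P = ∫ ω, w ω * ∫ s, g (X ω) s * f₀ (X ω) s ∂ν ∂P)
    (g : 𝓧 → 𝓢 → ℝ) (hgm : Measurable (uncurry g)) (hg : ∃ C, ∀ x s, |g x s| ≤ C) :
    ∫ ω, w ω * (f₁ (X ω) (S ω) / f₀ (X ω) (S ω) * g (X ω) (S ω)) ∂P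
      = ∫ ω, w ω * ∫ s, g (X ω) s * f₁ (X ω) s ∂ν ∂P := by
  obtain ⟨C₁, hC₁⟩ := hf₁
  obtain ⟨C, hC⟩ := hg
  rw [hdens (fun x s ↦ f₁ x s / f₀ x s * g x s) ((hf₁m.div hf₀m).mul hgm)
    ⟨C₁ / ε * C, fun x s ↦ abs_div_mul_le hε (hC₁ x s) (hf₀ x s) (hC x s)⟩]
  congr 1 with ω
  congr 1
  refine integral_congr_ae (ae_of_all _ fun s ↦ ?_)
  field_simp [(hε.trans_le (hf₀ (X ω) s)).ne']

theorem integral_mul_propensity_ratio_mul (w₀ w₁ : Ω → ℝ) (hε : 0 < ε) (q₀ q₁ : 𝓧 → ℝ)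
    (hq₀m : Measurable q₀) (hq₀ : ∀ x, ε ≤ q₀ x) (hq₁m : Measurable q₁) (hq₁ : ∃ C, ∀ x, |q₁ x| ≤ C)
    (hw₀ : ∀ k : 𝓧 → ℝ, Measurable k → (∃ C, ∀ x, |k x| ≤ C) →
      ∫ ω, w₀ ω * k (X ω) ∂P = ∫ ω, q₀ (X ω) * k (X ω) ∂P)
    (hw₁ : ∀ k : 𝓧 → ℝ, Measurable k → (∃ C, ∀ x, |k x| ≤ C) →
      ∫ ω, w₁ ω * k (X ω) ∂P = ∫ ω, q₁ (X ω) * k (X ω) ∂P)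
    (k : 𝓧 → ℝ) (hkm : Measurable k) (hk : ∃ C, ∀ x, |k x| ≤ C) :
    ∫ ω, w₀ ω * (q₁ (X ω) / q₀ (X ω) * k (X ω)) ∂P = ∫ ω, w₁ ω * k (X ω) ∂P := by
  obtain ⟨C₁, hC₁⟩ := hq₁
  obtain ⟨C, hC⟩ := hk
  rw [hw₀ (fun x ↦ q₁ x / q₀ x * k x) ((hq₁m.div hq₀m).mul hkm)
    ⟨C₁ / ε * C, fun x ↦ abs_div_mul_le hε (hC₁ x) (hq₀ x) (hC x)⟩, hw₁ k hkm ⟨C, hC⟩]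
  congr! 2 with ω
  field_simp [(hε.trans_le (hq₀ (X ω))).ne']

end Reweighting

theorem change_of_measure_density_ratio_general
    {Ω 𝓧 𝓢 : Type*} [MeasurableSpace Ω] [MeasurableSpace 𝓧] [MeasurableSpace 𝓢]
    (P : Measure Ω) [IsProbabilityMeasure P]
    (X : Ω → 𝓧) (A : Ω → ℕ) (Γ : Ω → ℕ) (S : Ω → 𝓢)
    (hX : Measurable X)
    (ε : ℝ) (hε : 0 < ε)
    (ν : Measure 𝓢)
    -- p1 is a version of P(Γ = 1 | X):
    (p1 : 𝓧 → ℝ) (hp1m : Measurable p1) (hp1bd : ∀ x, 0 ≤ p1 x ∧ p1 x ≤ 1)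
    (hp1 : ∀ h : 𝓧 → ℝ, Measurable h → (∃ C, ∀ x, |h x| ≤ C) →
      ∫ ω, (if Γ ω = 1 then (1:ℝ) else 0) * h (X ω) ∂P = ∫ ω, p1 (X ω) * h (X ω) ∂P)
    -- p10 is a version of P(A = 1, Γ = 0 | X), with positivity:
    (p10 : 𝓧 → ℝ) (hp10m : Measurable p10) (hp10bd : ∀ x, ε ≤ p10 x ∧ p10 x ≤ 1)
    (hp10 : ∀ h : 𝓧 → ℝ, Measurable h → (∃ C, ∀ x, |h x| ≤ C) →
      ∫ ω, (if A ω = 1 ∧ Γ ω = 0 then (1:ℝ) else 0) * h (X ω) ∂P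
        = ∫ ω, p10 (X ω) * h (X ω) ∂P)
    -- fa1 is the conditional ν-density of S given (X, A = a, Γ = 1):
    (fa1 : 𝓧 → 𝓢 → ℝ) (hfa1m : Measurable (Function.uncurry fa1))
    (Cf : ℝ) (hfa1bd : ∀ x s, 0 ≤ fa1 x s ∧ fa1 x s ≤ Cf)
    -- f10 is the conditional ν-density of S given (X, A = 1, Γ = 0), with positivity:
    (f10 : 𝓧 → 𝓢 → ℝ) (hf10m : Measurable (Function.uncurry f10))
    (hf10bd : ∀ x s, ε ≤ f10 x s ∧ f10 x s ≤ Cf)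
    (hf10 : ∀ g : 𝓧 → 𝓢 → ℝ, Measurable (Function.uncurry g) → (∃ C, ∀ x s, |g x s| ≤ C) →
      ∫ ω, (if A ω = 1 ∧ Γ ω = 0 then (1:ℝ) else 0) * g (X ω) (S ω) ∂P
        = ∫ ω, (if A ω = 1 ∧ Γ ω = 0 then (1:ℝ) else 0) * (∫ s, g (X ω) s * f10 (X ω) s ∂ν) ∂P)
    -- h is bounded measurable:
    (h : 𝓧 → 𝓢 → ℝ) (hhm : Measurable (Function.uncurry h))
    (Ch : ℝ) (hhb : ∀ x s, |h x s| ≤ Ch) :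
    ∫ ω, (if A ω = 1 ∧ Γ ω = 0 then (1:ℝ) else 0)
        * (p1 (X ω) / p10 (X ω)) * (fa1 (X ω) (S ω) / f10 (X ω) (S ω)) * h (X ω) (S ω) ∂P
      = ∫ ω, (if Γ ω = 1 then (1:ℝ) else 0) * (∫ s, h (X ω) s * fa1 (X ω) s ∂ν) ∂P := by
  have hp1b : ∃ C, ∀ x, |p1 x| ≤ C := ⟨1, fun x ↦ abs_le.mpr ⟨by linarith [hp1bd x], (hp1bd x).2⟩⟩
  have hfa1b : ∀ x s, |fa1 x s| ≤ Cf := fun x s ↦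
    abs_le.mpr ⟨by linarith [hfa1bd x s], (hfa1bd x s).2⟩
  have hν : IsFiniteMeasure ν := by
    have hp10X : Integrable (fun ω ↦ p10 (X ω)) P :=
      .of_bound (hp10m.comp hX).aestronglyMeasurable 1 <| ae_of_all _ fun ω ↦ by
        rw [Real.norm_eq_abs, abs_le]; constructor <;> linarith [hp10bd (X ω)]
    refine isFiniteMeasure_of_density_ge P X ν (fun ω ↦ if A ω = 1 ∧ Γ ω = 0 then (1:ℝ) else 0)
      hε f10 (fun x s ↦ (hf10bd x s).1)
      (by simpa using hf10 (fun _ _ ↦ 1) measurable_const ⟨1, by simp⟩) ?_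
    have hw := hp10 (fun _ ↦ 1) measurable_const ⟨1, by simp⟩
    simp only [mul_one] at hw
    rw [hw]
    refine (hε.trans_le ?_).ne'
    simpa using integral_mono (integrable_const ε) hp10X fun ω ↦ (hp10bd (X ω)).1
  calc _ = ∫ ω, (if A ω = 1 ∧ Γ ω = 0 then (1:ℝ) else 0) * (fa1 (X ω) (S ω) / f10 (X ω) (S ω)
          * (p1 (X ω) / p10 (X ω) * h (X ω) (S ω))) ∂P := by
        congr 1 with ω
        ring
    _ = ∫ ω, (if A ω = 1 ∧ Γ ω = 0 then (1:ℝ) else 0) * (p1 (X ω) / p10 (X ω)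
          * ∫ s, h (X ω) s * fa1 (X ω) s ∂ν) ∂P := by
        rw [integral_mul_density_ratio_mul P X S ν _ hε f10 fa1 hf10m (fun x s ↦ (hf10bd x s).1)
          hfa1m ⟨Cf, hfa1b⟩ hf10 (fun x s ↦ p1 x / p10 x * h x s)
          ((hp1m.comp measurable_fst).div (hp10m.comp measurable_fst) |>.mul hhm)
          (hp1b.elim fun C hC ↦ ⟨C / ε * Ch,
            fun x s ↦ abs_div_mul_le hε (hC x) (hp10bd x).1 (hhb x s)⟩)]
        simp_rw [mul_assoc, integral_const_mul]
    _ = _ := integral_mul_propensity_ratio_mul P X _ _ hε p10 p1 hp10m (fun x ↦ (hp10bd x).1)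
          hp1m hp1b hp10 hp1 _ (hhm.mul hfa1m).stronglyMeasurable.integral_prod_right'.measurable
          (exists_abs_integral_mul_le ν hhb hfa1b)

/-- Change-of-measure lemma: density-ratio weighting in the `(A = 1, Γ = 0)` stratum
reproduces the distribution of `S` under `(A = a, Γ = 1)` within the `Γ = 1` population:
`E[(1−Γ)1{A=1}·(P(Γ=1|X)/P(A=1,Γ=0|X))·(f(S|X,A=a,Γ=1)/f(S|X,A=1,Γ=0))·h(X,S)]
  = E[Γ·∫ h(X,s) f(s|X,A=a,Γ=1) ν(ds)]`. -/
theorem change_of_measure_density_ratio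
    {Ω 𝓧 𝓢 : Type*} [MeasurableSpace Ω] [MeasurableSpace 𝓧] [MeasurableSpace 𝓢]
    (P : Measure Ω) [IsProbabilityMeasure P]
    (X : Ω → 𝓧) (A : Ω → ℕ) (Γ : Ω → ℕ) (S : Ω → 𝓢)
    (hX : Measurable X) (hA : Measurable A) (hΓ : Measurable Γ) (hS : Measurable S)
    (hΓ01 : ∀ ω, Γ ω = 0 ∨ Γ ω = 1)
    (a : ℕ) (ε : ℝ) (hε : 0 < ε)
    (ν : Measure 𝓢) [SigmaFinite ν]
    -- p1 is a version of P(Γ = 1 | X):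
    (p1 : 𝓧 → ℝ) (hp1m : Measurable p1) (hp1bd : ∀ x, 0 ≤ p1 x ∧ p1 x ≤ 1)
    (hp1 : ∀ h : 𝓧 → ℝ, Measurable h → (∃ C, ∀ x, |h x| ≤ C) →
      ∫ ω, (if Γ ω = 1 then (1:ℝ) else 0) * h (X ω) ∂P = ∫ ω, p1 (X ω) * h (X ω) ∂P)
    -- p10 is a version of P(A = 1, Γ = 0 | X), with positivity:
    (p10 : 𝓧 → ℝ) (hp10m : Measurable p10) (hp10bd : ∀ x, ε ≤ p10 x ∧ p10 x ≤ 1)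
    (hp10 : ∀ h : 𝓧 → ℝ, Measurable h → (∃ C, ∀ x, |h x| ≤ C) →
      ∫ ω, (if A ω = 1 ∧ Γ ω = 0 then (1:ℝ) else 0) * h (X ω) ∂P
        = ∫ ω, p10 (X ω) * h (X ω) ∂P)
    -- fa1 is the conditional ν-density of S given (X, A = a, Γ = 1):
    (fa1 : 𝓧 → 𝓢 → ℝ) (hfa1m : Measurable (Function.uncurry fa1))
    (Cf : ℝ) (hfa1bd : ∀ x s, 0 ≤ fa1 x s ∧ fa1 x s ≤ Cf)
    (hfa1 : ∀ g : 𝓧 → 𝓢 → ℝ, Measurable (Function.uncurry g) → (∃ C, ∀ x s, |g x s| ≤ C) →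
      ∫ ω, (if A ω = a ∧ Γ ω = 1 then (1:ℝ) else 0) * g (X ω) (S ω) ∂P
        = ∫ ω, (if A ω = a ∧ Γ ω = 1 then (1:ℝ) else 0) * (∫ s, g (X ω) s * fa1 (X ω) s ∂ν) ∂P)
    -- f10 is the conditional ν-density of S given (X, A = 1, Γ = 0), with positivity:
    (f10 : 𝓧 → 𝓢 → ℝ) (hf10m : Measurable (Function.uncurry f10))
    (hf10bd : ∀ x s, ε ≤ f10 x s ∧ f10 x s ≤ Cf)
    (hf10 : ∀ g : 𝓧 → 𝓢 → ℝ, Measurable (Function.uncurry g) → (∃ C, ∀ x s, |g x s| ≤ C) →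
      ∫ ω, (if A ω = 1 ∧ Γ ω = 0 then (1:ℝ) else 0) * g (X ω) (S ω) ∂P
        = ∫ ω, (if A ω = 1 ∧ Γ ω = 0 then (1:ℝ) else 0) * (∫ s, g (X ω) s * f10 (X ω) s ∂ν) ∂P)
    -- h is bounded measurable:
    (h : 𝓧 → 𝓢 → ℝ) (hhm : Measurable (Function.uncurry h))
    (Ch : ℝ) (hhb : ∀ x s, |h x s| ≤ Ch) :
    ∫ ω, (if A ω = 1 ∧ Γ ω = 0 then (1:ℝ) else 0)
        * (p1 (X ω) / p10 (X ω)) * (fa1 (X ω) (S ω) / f10 (X ω) (S ω)) * h (X ω) (S ω) ∂P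
      = ∫ ω, (if Γ ω = 1 then (1:ℝ) else 0) * (∫ s, h (X ω) s * fa1 (X ω) s ∂ν) ∂P :=
  change_of_measure_density_ratio_general P X A Γ S hX ε hε ν p1 hp1m hp1bd hp1 p10 hp10m hp10bd
    hp10 fa1 hfa1m Cf hfa1bd f10 hf10m hf10bd hf10 h hhm Ch hhb
end
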